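/- arXiv:2410.01917 — 4 statements merged into one kernel-verified Lean document; each statement's English description precedes it below -/
import Mathlib

section
/- Let n ≥ 2 and let Z be the (2^n - 2) × n real matrix whose rows are indexed by binary vectors z ∈ {0,1}^n with 0 < ‖z‖₁ < n, with row z equal to √(w(‖z‖₁))·zᵀ where w(s) = (C(n,s)·s·(n-s))^{-1}. Then ZᵀZ = (1/n)·I + c_n·11ᵀ, where c_n = Σ_{s=2}^{n-1} C(n-2, s-2)·w(s). -/
open Matrix Finset

-- ℕ identity: C(m,k)*(m-k) = m*C(m-1,k) for k < m
lemma choose_mul_sub (m k : ℕ) (h : k < m) :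
    m.choose k * (m - k) = m * (m - 1).choose k := by
  have hk : k ≤ m := h.le
  have h1 : 1 ≤ m - k := by omega
  have := Nat.add_one_mul_choose_eq (m - 1) (m - k - 1)
  have hm : m - 1 + 1 = m := by omega
  have hmk : m - k - 1 + 1 = m - k := by omega
  rw [hm, hmk] at this
  -- this : m * (m-1).choose (m-k-1) = m.choose (m-k) * (m-k)
  have hsym1 : (m - 1).choose (m - k - 1) = (m - 1).choose k := by
    rw [← Nat.choose_symm (show m - k - 1 ≤ m - 1 by omega)]
    congr 1
    omega
  have hsym2 : m.choose (m - k) = m.choose k := by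
    rw [← Nat.choose_symm hk]
  rw [hsym1, hsym2] at this
  omega

lemma main_nat_id (n s : ℕ) (hn : 2 ≤ n) (h1 : 1 ≤ s) (h2 : s ≤ n - 1) :
    n.choose s * s * (n - s) = n * (n - 1) * (n - 2).choose (s - 1) := by
  have step1 : n.choose s * s = n * (n - 1).choose (s - 1) := by
    have := Nat.add_one_mul_choose_eq (n - 1) (s - 1)
    have hm : n - 1 + 1 = n := by omega
    have hs : s - 1 + 1 = s := by omega
    rw [hm, hs] at this
    omega
  have step2 : (n - 1).choose (s - 1) * (n - s) = (n - 1) * (n - 2).choose (s - 1) := by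
    have h := choose_mul_sub (n - 1) (s - 1) (by omega)
    rw [show n - 1 - (s - 1) = n - s by omega,
      show n - 1 - 1 = n - 2 by omega] at h
    exact h
  calc n.choose s * s * (n - s) = n * (n - 1).choose (s - 1) * (n - s) := by rw [step1]
    _ = n * ((n - 1).choose (s - 1) * (n - s)) := by ring
    _ = n * ((n - 1) * (n - 2).choose (s - 1)) := by rw [step2]
    _ = n * (n - 1) * (n - 2).choose (s - 1) := by ring

lemma count_subsets (n s : ℕ) (T : Finset (Fin n)) (hT : T.card ≤ s) :
    ((Finset.univ : Finset (Finset (Fin n))).filter (fun S => S.card = s ∧ T ⊆ S)).card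
      = (n - T.card).choose (s - T.card) := by
  have h1 : (Finset.powersetCard (s - T.card) ((Finset.univ : Finset (Fin n)) \ T)).card
      = (n - T.card).choose (s - T.card) := by
    rw [Finset.card_powersetCard, Finset.card_sdiff_of_subset (Finset.subset_univ T),
      Finset.card_univ, Fintype.card_fin]
  rw [← h1]
  apply Finset.card_bij (fun S _ => S \ T)
  · intro S hS
    simp only [Finset.mem_filter, Finset.mem_univ, true_and] at hS
    rw [Finset.mem_powersetCard]
    exact ⟨Finset.sdiff_subset_sdiff (Finset.subset_univ S) le_rfl,
      by rw [Finset.card_sdiff_of_subset hS.2, hS.1]⟩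
  · intro S1 h1' S2 h2' h
    simp only [Finset.mem_filter, Finset.mem_univ, true_and] at h1' h2'
    rw [← Finset.sdiff_union_of_subset h1'.2, ← Finset.sdiff_union_of_subset h2'.2, h]
  · intro b hb
    rw [Finset.mem_powersetCard] at hb
    have hdisj : Disjoint b T := by
      refine Finset.disjoint_left.2 fun a ha hat => ?_
      have := hb.1 ha
      simp [Finset.mem_sdiff] at this
      exact this hat
    refine ⟨b ∪ T, ?_, ?_⟩
    · simp only [Finset.mem_filter, Finset.mem_univ, true_and]
      constructor
      · rw [Finset.card_union_of_disjoint hdisj, hb.2]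
        omega
      · exact Finset.subset_union_right
    · exact Finset.union_sdiff_cancel_right hdisj

lemma sum_card_eq (n : ℕ) (w : ℕ → ℝ) (T : Finset (Fin n)) (hT : 0 < T.card) :
    ∑ S ∈ (Finset.univ.filter (fun S : Finset (Fin n) =>
        (0 < S.card ∧ S.card < n) ∧ T ⊆ S)), w S.card
      = ∑ s ∈ Finset.Icc T.card (n - 1),
          ((n - T.card).choose (s - T.card) : ℝ) * w s := by
  have hmaps : ∀ S ∈ (Finset.univ.filter (fun S : Finset (Fin n) =>
      (0 < S.card ∧ S.card < n) ∧ T ⊆ S)), S.card ∈ Finset.Icc T.card (n - 1) := by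
    intro S hS
    simp only [Finset.mem_filter, Finset.mem_univ, true_and] at hS
    have h1 := Finset.card_le_card hS.2
    have h2 := hS.1.2
    simp only [Finset.mem_Icc]
    omega
  rw [← Finset.sum_fiberwise_of_maps_to hmaps (fun S => w S.card)]
  refine Finset.sum_congr rfl fun s hs => ?_
  rw [Finset.mem_Icc] at hs
  have hfeq : ((Finset.univ.filter (fun S : Finset (Fin n) =>
      (0 < S.card ∧ S.card < n) ∧ T ⊆ S)).filter (fun S => S.card = s))
      = Finset.univ.filter (fun S : Finset (Fin n) => S.card = s ∧ T ⊆ S) := by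
    rw [Finset.filter_filter]
    refine Finset.filter_congr fun S _ => ?_
    constructor
    · rintro ⟨⟨_, h⟩, hc⟩; exact ⟨hc, h⟩
    · rintro ⟨h1, h2⟩
      exact ⟨⟨⟨by omega, by omega⟩, h2⟩, h1⟩
  calc ∑ S ∈ ((Finset.univ.filter (fun S : Finset (Fin n) =>
        (0 < S.card ∧ S.card < n) ∧ T ⊆ S)).filter (fun S => S.card = s)), w S.card
      = ∑ S ∈ ((Finset.univ.filter (fun S : Finset (Fin n) =>
        (0 < S.card ∧ S.card < n) ∧ T ⊆ S)).filter (fun S => S.card = s)), w s := by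
        refine Finset.sum_congr rfl fun S hS => ?_
        rw [Finset.mem_filter] at hS
        rw [hS.2]
    _ = ((n - T.card).choose (s - T.card) : ℝ) * w s := by
        rw [Finset.sum_const, hfeq, count_subsets n s T hs.1, nsmul_eq_mul]

theorem ZTZ_form (n : ℕ) (hn : 2 ≤ n)
    (w : ℕ → ℝ) (hw : ∀ t, 1 ≤ t → t ≤ n - 1 → w t = ((n.choose t : ℝ) * t * (n - t))⁻¹)
    (Z : Matrix {S : Finset (Fin n) // 0 < S.card ∧ S.card < n} (Fin n) ℝ)
    (hZ : ∀ S i, Z S i = Real.sqrt (w S.1.card) * (if i ∈ S.1 then 1 else 0))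
    (cn : ℝ) (hcn : cn = ∑ s ∈ Finset.Icc 2 (n - 1), ((n - 2).choose (s - 2) : ℝ) * w s) :
    Zᵀ * Z = (1 / n : ℝ) • (1 : Matrix (Fin n) (Fin n) ℝ)
      + cn • Matrix.of (fun (_ _ : Fin n) => (1 : ℝ)) := by
  -- w is nonneg on relevant range
  have hwnn : ∀ t, 1 ≤ t → t ≤ n - 1 → 0 ≤ w t := by
    intro t h1 h2
    rw [hw t h1 h2]
    have ht : (t : ℝ) ≤ n := by
      have : t ≤ n := by omega
      exact_mod_cast this
    apply inv_nonneg.2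
    apply mul_nonneg (mul_nonneg (by positivity) (by positivity))
    linarith
  -- per-term identity for w in ℝ
  have hterm : ∀ s, 1 ≤ s → s ≤ n - 1 →
      (((n - 2).choose (s - 1) : ℕ) : ℝ) * w s = ((n : ℝ) * ((n : ℝ) - 1))⁻¹ := by
    intro s h1 h2
    rw [hw s h1 h2]
    have hcast : ((n : ℝ) - s) = ((n - s : ℕ) : ℝ) := by
      have : s ≤ n := by omega
      push_cast [this]
      ring
    rw [hcast]
    have hid := main_nat_id n s hn h1 h2
    have hne : ((n - 2).choose (s - 1) : ℝ) ≠ 0 := by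
      have : 0 < (n - 2).choose (s - 1) := Nat.choose_pos (by omega)
      positivity
    have hnne : (n : ℝ) * ((n : ℝ) - 1) ≠ 0 := by
      have h2' : (2 : ℝ) ≤ n := by exact_mod_cast hn
      nlinarith
    have hprod : (n.choose s : ℝ) * s * ((n - s : ℕ) : ℝ)
        = (n : ℝ) * ((n : ℝ) - 1) * ((n - 2).choose (s - 1) : ℝ) := by
      have := congrArg (fun x : ℕ => (x : ℝ)) hid
      push_cast [Nat.cast_sub (show 1 ≤ n by omega),
        Nat.cast_sub (show s ≤ n by omega)] at this
      push_cast [Nat.cast_sub (show s ≤ n by omega),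
        Nat.cast_sub (show 1 ≤ n by omega)]
      linarith [this]
    rw [hprod, mul_inv, mul_comm, mul_assoc, inv_mul_cancel₀ hne, mul_one]
  ext i j
  rw [Matrix.add_apply, Matrix.smul_apply, Matrix.smul_apply, Matrix.mul_apply]
  simp only [Matrix.transpose_apply, hZ, Matrix.of_apply, smul_eq_mul, mul_one]
  -- simplify each entry product
  have hprod : ∀ S : {S : Finset (Fin n) // 0 < S.card ∧ S.card < n},
      (Real.sqrt (w S.1.card) * (if i ∈ S.1 then 1 else 0)) *
        (Real.sqrt (w S.1.card) * (if j ∈ S.1 then 1 else 0))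
      = w S.1.card * (if ({i, j} : Finset (Fin n)) ⊆ S.1 then 1 else 0) := by
    intro S
    have hnn : 0 ≤ w S.1.card := hwnn _ S.2.1 (by
      have := S.2.2; omega)
    rw [show (Real.sqrt (w S.1.card) * (if i ∈ S.1 then 1 else 0)) *
        (Real.sqrt (w S.1.card) * (if j ∈ S.1 then 1 else 0))
      = (Real.sqrt (w S.1.card) * Real.sqrt (w S.1.card)) *
        ((if i ∈ S.1 then 1 else 0) * (if j ∈ S.1 then 1 else 0)) from by ring,
      Real.mul_self_sqrt hnn]
    congr 1
    by_cases h1 : i ∈ S.1 <;> by_cases h2 : j ∈ S.1 <;>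
      simp [h1, h2, Finset.insert_subset_iff]
  rw [Finset.sum_congr rfl (fun S _ => hprod S)]
  -- convert subtype sum to filter sum
  have hsub := (Finset.sum_subtype
    (p := fun S : Finset (Fin n) => 0 < S.card ∧ S.card < n)
    (F := inferInstance)
    (Finset.univ.filter (fun S : Finset (Fin n) => 0 < S.card ∧ S.card < n))
    (fun S => by simp only [Finset.mem_filter, Finset.mem_univ, true_and])
    (fun S : Finset (Fin n) =>
      w S.card * (if ({i, j} : Finset (Fin n)) ⊆ S then 1 else 0))).symm
  rw [hsub]
  simp only [mul_ite, mul_one, mul_zero]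
  rw [← Finset.sum_filter, Finset.filter_filter]
  have hT : 0 < ({i, j} : Finset (Fin n)).card := Finset.card_pos.2 ⟨i, by simp⟩
  rw [sum_card_eq n w {i, j} hT]
  by_cases hij : i = j
  · -- diagonal
    subst hij
    have hii : ({i, i} : Finset (Fin n)) = {i} := by simp
    rw [hii, Finset.card_singleton, Matrix.one_apply_eq]
    -- goal: ∑ s in Icc 1 (n-1), C(n-1, s-1) * w s = 1/n * 1 + cn
    have hsplit : Finset.Icc 1 (n - 1) = insert 1 (Finset.Icc 2 (n - 1)) := by
      ext x
      simp only [Finset.mem_Icc, Finset.mem_insert]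
      omega
    have h1n : (1 : ℕ) ∉ Finset.Icc 2 (n - 1) := by simp
    have pascal : ∀ s ∈ Finset.Icc 2 (n - 1),
        ((n - 1).choose (s - 1) : ℝ) * w s
          = ((n - 2).choose (s - 2) : ℝ) * w s + ((n - 2).choose (s - 1) : ℝ) * w s := by
      intro s hs
      rw [Finset.mem_Icc] at hs
      have hp : (n - 1).choose (s - 1) = (n - 2).choose (s - 2) + (n - 2).choose (s - 1) := by
        have := Nat.choose_succ_succ' (n - 2) (s - 2)
        rw [show n - 2 + 1 = n - 1 by omega, show s - 2 + 1 = s - 1 by omega] at this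
        exact this
      rw [hp]
      push_cast
      ring
    have hconstsum : ∑ s ∈ Finset.Icc 1 (n - 1), ((n - 2).choose (s - 1) : ℝ) * w s
        = 1 / n := by
      have hall : ∀ s ∈ Finset.Icc 1 (n - 1),
          ((n - 2).choose (s - 1) : ℝ) * w s = ((n : ℝ) * ((n : ℝ) - 1))⁻¹ := by
        intro s hs
        rw [Finset.mem_Icc] at hs
        exact hterm s hs.1 hs.2
      rw [Finset.sum_congr rfl hall, Finset.sum_const, Nat.card_Icc, nsmul_eq_mul]
      have h2 : ((n - 1 + 1 - 1 : ℕ) : ℝ) = (n : ℝ) - 1 := by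
        push_cast [Nat.cast_sub (show 1 ≤ n by omega)]
        ring
      rw [h2]
      have hn0 : (n : ℝ) ≠ 0 := by
        have : (2 : ℝ) ≤ n := by exact_mod_cast hn
        linarith
      have hn1 : (n : ℝ) - 1 ≠ 0 := by
        have : (2 : ℝ) ≤ n := by exact_mod_cast hn
        linarith
      field_simp
    calc ∑ s ∈ Finset.Icc 1 (n - 1), ((n - 1).choose (s - 1) : ℝ) * w s
        = ((n - 1).choose 0 : ℝ) * w 1
            + ∑ s ∈ Finset.Icc 2 (n - 1), ((n - 1).choose (s - 1) : ℝ) * w s := by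
          rw [hsplit, Finset.sum_insert h1n]
      _ = ((n - 2).choose 0 : ℝ) * w 1
            + ∑ s ∈ Finset.Icc 2 (n - 1), (((n - 2).choose (s - 2) : ℝ) * w s
                + ((n - 2).choose (s - 1) : ℝ) * w s) := by
          rw [Finset.sum_congr rfl pascal]
          norm_num
      _ = cn + ∑ s ∈ Finset.Icc 1 (n - 1), ((n - 2).choose (s - 1) : ℝ) * w s := by
          rw [Finset.sum_add_distrib, hcn, hsplit, Finset.sum_insert h1n]
          ring
      _ = 1 / n * 1 + cn := by rw [hconstsum]; ring
  · -- off-diagonal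
    have hcard : ({i, j} : Finset (Fin n)).card = 2 := by
      rw [Finset.card_insert_of_notMem (by simp [hij]), Finset.card_singleton]
    rw [hcard, Matrix.one_apply_ne hij, hcn]
    ring
end

section
/- Let n ≥ 2, P = I - (1/n)·11ᵀ the projection onto the orthogonal complement of the all-ones vector in ℝⁿ, and Z the weighted subset-indicator matrix with rows √(w(‖z‖₁))·zᵀ for z ∈ {0,1}^n with 0 < ‖z‖₁ < n, where w(s) = (C(n,s)·s·(n-s))^{-1}. Then AᵀA = (1/n)·P where A = ZP. -/
/-!
The centering matrix `P` is symmetric, idempotent and annihilates the all-ones matrix `J`, so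
`P (a • 1 + b • J) P = a • P` and it suffices to show `ZᵀZ = (1/n) • 1 + c • J`.
The entry `(i, j)` of `ZᵀZ` is `∑ₖ w k · #{S : |S| = k, i ∈ S, j ∈ S}`, and on each layer `|S| = k`
the diagonal exceeds the off-diagonal entries by `#{S : |S| = k, i ∈ S, j ∉ S} = C(n-2, k-1)`.
The weights are chosen so that `w k · C(n-2, k-1) = 1 / (n (n-1))`, as
`C(n, k) · k · (n - k) = n (n - 1) C(n-2, k-1)`; summing over the `n - 1` layers gives `1 / n`.
-/

open Finset Matrix

theorem Nat.add_two_choose_succ_mul_succ_mul_sub (n k : ℕ) :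
    (n + 2).choose (k + 1) * (k + 1) * (n + 1 - k) = (n + 2) * (n + 1) * n.choose k := by
  have h₁ := Nat.add_one_mul_choose_eq n k
  have h₂ := Nat.choose_mul_succ_eq (n + 1) (k + 1)
  rw [show n + 1 + 1 - (k + 1) = n + 1 - k by omega] at h₂
  calc (n + 2).choose (k + 1) * (k + 1) * (n + 1 - k)
      = (n + 2).choose (k + 1) * (n + 1 - k) * (k + 1) := by ring
    _ = (n + 1).choose (k + 1) * (k + 1) * (n + 2) := by rw [← h₂]; ring
    _ = (n + 2) * (n + 1) * n.choose k := by rw [← h₁]; ring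

namespace Finset

variable {α : Type*} [Fintype α]

theorem sum_subtype_card_pos_lt {M : Type*} [AddCommMonoid M] (n : ℕ) (f : Finset α → M) :
    ∑ S : {S : Finset α // 0 < S.card ∧ S.card < n}, f S
      = ∑ m ∈ range (n - 1), ∑ S ∈ powersetCard (m + 1) univ, f S := by
  rw [← sum_subtype {S | 0 < S.card ∧ S.card < n} (by simp),
    ← sum_fiberwise_of_maps_to (g := fun S => S.card - 1) (t := range (n - 1))
      fun S hS => by
        simp only [mem_filter, mem_univ, true_and] at hS
        simp only [mem_range]
        omega]
  refine sum_congr rfl fun m hm => sum_congr ?_ fun _ _ => rfl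
  ext S
  simp only [mem_range] at hm
  simp only [mem_filter, mem_univ, true_and, mem_powersetCard, subset_univ]
  omega

variable [DecidableEq α]

theorem card_filter_mem_powersetCard_univ (i : α) (m : ℕ) :
    #{S ∈ powersetCard (m + 1) univ | i ∈ S} = (Fintype.card α - 1).choose m := by
  simpa using card_filter_powersetCard_subset {i} univ (m + 1) (subset_univ _) (by simp)

theorem card_filter_mem_notMem_powersetCard_univ {i j : α} (hij : i ≠ j) (m : ℕ) :
    #{S ∈ powersetCard (m + 1) univ | i ∈ S ∧ j ∉ S} = (Fintype.card α - 2).choose m := by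
  have h := card_filter_powersetCard_subset {i} (univ.erase j) (m + 1) (by simpa using hij)
    (by simp)
  rw [card_erase_of_mem (mem_univ j), card_singleton, card_univ, Nat.sub_sub,
    Nat.add_sub_cancel] at h
  rw [← h]
  congr 1
  ext S
  simp only [mem_filter, mem_powersetCard, subset_univ, true_and, singleton_subset_iff,
    subset_erase]
  tauto

theorem card_filter_mem_mem_powersetCard_univ (i j : α) (m : ℕ) :
    (#{S ∈ powersetCard (m + 1) univ | i ∈ S ∧ j ∈ S} : ℝ)
      = (Fintype.card α - 2).choose m * (if i = j then 1 else 0)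
        + ((Fintype.card α - 1).choose m - (Fintype.card α - 2).choose m) := by
  obtain rfl | hij := eq_or_ne i j
  · simp [card_filter_mem_powersetCard_univ]
  · have h := card_filter_add_card_filter_not (s := {S ∈ powersetCard (m + 1) univ | i ∈ S})
      (j ∈ ·)
    simp only [filter_filter, card_filter_mem_powersetCard_univ,
      card_filter_mem_notMem_powersetCard_univ hij] at h
    rw [if_neg hij, ← h]
    push_cast
    ring

end Finset

section Centering

variable (α : Type*) [Fintype α] [DecidableEq α]

noncomputable def centeringMatrix : Matrix α α ℝ := 1 - (1 / Fintype.card α : ℝ) • of fun _ _ => 1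

variable {α}

theorem centeringMatrix_transpose : (centeringMatrix α)ᵀ = centeringMatrix α := by
  ext i j
  simp [centeringMatrix, one_apply, eq_comm]

theorem centeringMatrix_mul_ones [Nonempty α] :
    centeringMatrix α * (of fun _ _ => 1 : Matrix α α ℝ) = 0 := by
  have hα : (Fintype.card α : ℝ) ≠ 0 := Nat.cast_ne_zero.2 Fintype.card_ne_zero
  rw [centeringMatrix, Matrix.sub_mul, Matrix.smul_mul, Matrix.one_mul, sub_eq_zero]
  ext i j
  simp [Matrix.mul_apply, hα]

theorem centeringMatrix_mul_self [Nonempty α] :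
    centeringMatrix α * centeringMatrix α = centeringMatrix α := by
  nth_rw 2 [centeringMatrix]
  rw [Matrix.mul_sub, Matrix.mul_smul, centeringMatrix_mul_ones, Matrix.mul_one, smul_zero,
    sub_zero]

theorem centeringMatrix_mul_mul_centeringMatrix [Nonempty α] (a b : ℝ) :
    centeringMatrix α * (a • 1 + b • of fun _ _ => 1) * centeringMatrix α
      = a • centeringMatrix α := by
  rw [Matrix.mul_add, Matrix.mul_smul, Matrix.mul_smul, centeringMatrix_mul_ones, Matrix.mul_one,
    smul_zero, add_zero, Matrix.smul_mul, centeringMatrix_mul_self]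

end Centering

theorem weight_mul_choose_eq {n : ℕ} (hn : 2 ≤ n) {w : ℕ → ℝ}
    (hw : ∀ t, 1 ≤ t → t ≤ n - 1 → w t = ((n.choose t : ℝ) * t * (n - t))⁻¹)
    {m : ℕ} (hm : m < n - 1) :
    w (m + 1) * (n - 2).choose m = ((n : ℝ) * (n - 1))⁻¹ := by
  obtain ⟨N, rfl⟩ : ∃ N, n = N + 2 := ⟨n - 2, by omega⟩
  have hid : ((N + 2).choose (m + 1) : ℝ) * (m + 1) * (N + 2 - (m + 1))
      = (N + 2) * (N + 1) * N.choose m := by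
    have := congrArg (Nat.cast (R := ℝ)) (Nat.add_two_choose_succ_mul_succ_mul_sub N m)
    push_cast [Nat.cast_sub (show m ≤ N + 1 by omega)] at this
    linear_combination this
  have hchoose : (N.choose m : ℝ) ≠ 0 := Nat.cast_ne_zero.2 (Nat.choose_pos (by omega)).ne'
  rw [hw (m + 1) (by omega) (by omega), Nat.add_sub_cancel]
  push_cast
  rw [hid, show (N : ℝ) + 2 - 1 = N + 1 by ring, mul_inv _ (N.choose m : ℝ),
    inv_mul_cancel_right₀ hchoose]

theorem sum_weight_mul_choose {n : ℕ} (hn : 2 ≤ n) {w : ℕ → ℝ}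
    (hw : ∀ t, 1 ≤ t → t ≤ n - 1 → w t = ((n.choose t : ℝ) * t * (n - t))⁻¹) :
    ∑ m ∈ range (n - 1), w (m + 1) * (n - 2).choose m = 1 / n := by
  have hn' : (n : ℝ) - 1 ≠ 0 := sub_ne_zero.2 (by exact_mod_cast (by omega : n ≠ 1))
  rw [sum_congr rfl fun m hm => weight_mul_choose_eq hn hw (mem_range.1 hm), sum_const,
    card_range, nsmul_eq_mul, Nat.cast_sub (by omega), Nat.cast_one]
  field_simp

theorem transpose_mul_self_of_weighted_indicator {α : Type*} [Fintype α] [DecidableEq α]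
    {n : ℕ} (hn : 2 ≤ n) (hα : Fintype.card α = n) {w : ℕ → ℝ}
    (hw : ∀ t, 1 ≤ t → t ≤ n - 1 → w t = ((n.choose t : ℝ) * t * (n - t))⁻¹)
    (Z : Matrix {S : Finset α // 0 < S.card ∧ S.card < n} α ℝ)
    (hZ : ∀ S i, Z S i = √(w S.1.card) * if i ∈ S.1 then 1 else 0) :
    Zᵀ * Z = (1 / n : ℝ) • 1
      + (∑ m ∈ range (n - 1), w (m + 1) * (((n - 1).choose m : ℝ) - (n - 2).choose m))
        • of fun _ _ => 1 := by
  subst hα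
  have hw₀ : ∀ S : {S : Finset α // 0 < S.card ∧ S.card < Fintype.card α}, 0 ≤ w S.1.card := by
    intro ⟨S, hS₀, hS⟩
    have : (S.card : ℝ) ≤ Fintype.card α := by exact_mod_cast hS.le
    rw [hw _ hS₀ (by omega)]
    exact inv_nonneg.2 (by positivity)
  have hZZ : ∀ S i j, Z S i * Z S j = w S.1.card * if i ∈ S.1 ∧ j ∈ S.1 then 1 else 0 := by
    intro S i j
    rw [hZ, hZ, ite_and]
    split_ifs <;> simp [Real.mul_self_sqrt (hw₀ S)]
  ext i j
  calc (Zᵀ * Z) i j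
      = ∑ m ∈ range (Fintype.card α - 1),
          w (m + 1) * #{S ∈ powersetCard (m + 1) univ | i ∈ S ∧ j ∈ S} := by
        simp only [mul_apply, transpose_apply, hZZ]
        rw [sum_subtype_card_pos_lt (f := fun S => w S.card * if i ∈ S ∧ j ∈ S then 1 else 0)]
        refine sum_congr rfl fun m _ => ?_
        rw [sum_congr rfl fun S hS => by rw [(mem_powersetCard.1 hS).2], ← mul_sum, sum_boole]
    _ = _ := by
        simp only [card_filter_mem_mem_powersetCard_univ, mul_add, sum_add_distrib, ← mul_assoc,
          ← sum_mul, sum_weight_mul_choose hn hw]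
        simp [one_apply]

theorem ATA_form (n : ℕ) (hn : 2 ≤ n)
    (w : ℕ → ℝ) (hw : ∀ t, 1 ≤ t → t ≤ n - 1 → w t = ((n.choose t : ℝ) * t * (n - t))⁻¹)
    (Z : Matrix {S : Finset (Fin n) // 0 < S.card ∧ S.card < n} (Fin n) ℝ)
    (hZ : ∀ S i, Z S i = Real.sqrt (w S.1.card) * (if i ∈ S.1 then 1 else 0))
    (P : Matrix (Fin n) (Fin n) ℝ)
    (hP : P = 1 - (1 / n : ℝ) • Matrix.of (fun (_ _ : Fin n) => (1 : ℝ)))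
    (A : Matrix {S : Finset (Fin n) // 0 < S.card ∧ S.card < n} (Fin n) ℝ)
    (hA : A = Z * P) :
    Aᵀ * A = (1 / n : ℝ) • P := by
  have : NeZero n := ⟨by omega⟩
  have hP' : P = centeringMatrix (Fin n) := by rw [hP, centeringMatrix, Fintype.card_fin]
  rw [hA, transpose_mul, hP', centeringMatrix_transpose, Matrix.mul_assoc, ← Matrix.mul_assoc Zᵀ,
    transpose_mul_self_of_weighted_indicator hn (Fintype.card_fin n) hw Z hZ, ← Matrix.mul_assoc,
    centeringMatrix_mul_mul_centeringMatrix]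
end

section
/- Let n ≥ 2 and z ∈ {0,1}^n with 0 < ‖z‖₁ < n. With w(s) = (C(n,s)·s·(n-s))^{-1}, the quantity w(‖z‖₁)·(z - (‖z‖₁/n)·1)ᵀ·(n·I - 11ᵀ)·(z - (‖z‖₁/n)·1) equals C(n, ‖z‖₁)^{-1}. -/
/-!
The matrix `n • 1 - J` (with `J` the all-ones matrix) is the Laplacian of the complete graph: its
quadratic form is `n ‖u‖² - (∑ u)²`, which does not change when a constant is subtracted from `u`.
So the centering of `z` can be dropped, and at the indicator of `S` the form counts the edges
leaving `S`, namely `|S| (n - |S|)`; the weight `w` cancels this factor, leaving `C(n, |S|)⁻¹`.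
-/

open Matrix

section

variable {ι R : Type*} [Fintype ι] [CommRing R]

theorem ones_mulVec (u : ι → R) :
    Matrix.of (fun _ _ : ι => (1 : R)) *ᵥ u = fun _ => ∑ i, u i := by
  ext
  simp [mulVec, dotProduct]

theorem card_mul_dotProduct_self_sub_sq_sum_sub_const (u : ι → R) (c : R) :
    Fintype.card ι * ((fun i => u i - c) ⬝ᵥ fun i => u i - c) - (∑ i, (u i - c)) ^ 2 =
      Fintype.card ι * (u ⬝ᵥ u) - (∑ i, u i) ^ 2 := by
  simp only [dotProduct, sub_mul, mul_sub, Finset.sum_sub_distrib, Finset.sum_const,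
    Finset.card_univ, nsmul_eq_mul, ← Finset.sum_mul, ← Finset.mul_sum]
  ring

variable [DecidableEq ι]

theorem dotProduct_smul_one_sub_ones_mulVec (c : R) (u : ι → R) :
    u ⬝ᵥ ((c • (1 : Matrix ι ι R) - Matrix.of fun _ _ => 1) *ᵥ u) =
      c * (u ⬝ᵥ u) - (∑ i, u i) ^ 2 := by
  rw [sub_mulVec, smul_mulVec, one_mulVec, ones_mulVec, dotProduct_sub, dotProduct_smul,
    smul_eq_mul, sq]
  simp [dotProduct, Finset.sum_mul]

theorem sum_ite_mem_one_zero (S : Finset ι) :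
    ∑ i, (if i ∈ S then (1 : R) else 0) = S.card := by
  simp

theorem dotProduct_self_ite_mem_one_zero (S : Finset ι) :
    ((fun i => if i ∈ S then (1 : R) else 0) ⬝ᵥ fun i => if i ∈ S then (1 : R) else 0) =
      S.card := by
  simp [dotProduct]

theorem dotProduct_card_smul_one_sub_ones_mulVec_ite_mem_sub_const (S : Finset ι) (c : R) :
    (fun i => (if i ∈ S then 1 else 0) - c) ⬝ᵥ
        (((Fintype.card ι : R) • (1 : Matrix ι ι R) - Matrix.of fun _ _ => 1) *ᵥ
          fun i => (if i ∈ S then 1 else 0) - c) =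
      S.card * (Fintype.card ι - S.card) := by
  rw [dotProduct_smul_one_sub_ones_mulVec, card_mul_dotProduct_self_sub_sq_sum_sub_const,
    dotProduct_self_ite_mem_one_zero, sum_ite_mem_one_zero]
  ring

end

theorem leverage_score_closed_form_general (n : ℕ)
    (w : ℕ → ℝ) (hw : ∀ t, 1 ≤ t → t ≤ n - 1 → w t = ((n.choose t : ℝ) * t * (n - t))⁻¹)
    (S : Finset (Fin n)) (hS0 : 0 < S.card) (hSn : S.card < n)
    (z : Fin n → ℝ) (hz : ∀ i, z i = if i ∈ S then 1 else 0)
    (u : Fin n → ℝ) (hu : u = fun i => z i - (S.card : ℝ) / n) :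
    w S.card *
      (u ⬝ᵥ (((n : ℝ) • (1 : Matrix (Fin n) (Fin n) ℝ)
        - Matrix.of (fun (_ _ : Fin n) => (1 : ℝ))) *ᵥ u)) =
      ((n.choose S.card : ℝ))⁻¹ := by
  obtain rfl : z = fun i => if i ∈ S then (1 : ℝ) else 0 := funext hz
  have hform := dotProduct_card_smul_one_sub_ones_mulVec_ite_mem_sub_const (R := ℝ) S (S.card / n)
  rw [Fintype.card_fin] at hform
  have hs : (S.card : ℝ) ≠ 0 := by positivity
  have hns : (n : ℝ) - S.card ≠ 0 := sub_ne_zero.mpr (by exact_mod_cast hSn.ne')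
  have hC : (n.choose S.card : ℝ) ≠ 0 := by exact_mod_cast (Nat.choose_pos hSn.le).ne'
  rw [hu, hform, hw S.card hS0 (by omega)]
  field_simp

theorem leverage_score_closed_form (n : ℕ) (hn : 2 ≤ n)
    (w : ℕ → ℝ) (hw : ∀ t, 1 ≤ t → t ≤ n - 1 → w t = ((n.choose t : ℝ) * t * (n - t))⁻¹)
    (S : Finset (Fin n)) (hS0 : 0 < S.card) (hSn : S.card < n)
    (z : Fin n → ℝ) (hz : ∀ i, z i = if i ∈ S then 1 else 0)
    (u : Fin n → ℝ) (hu : u = fun i => z i - (S.card : ℝ) / n) :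
    w S.card *
      (u ⬝ᵥ (((n : ℝ) • (1 : Matrix (Fin n) (Fin n) ℝ)
        - Matrix.of (fun (_ _ : Fin n) => (1 : ℝ))) *ᵥ u)) =
      ((n.choose S.card : ℝ))⁻¹ :=
  leverage_score_closed_form_general n w hw S hS0 hSn z hz u hu
end

section
/- Under the setup of the previous two identities (A annihilates 1 and scales 1^⊥ by 1/√n, φ and φ̃ agree in the 1-direction with ⟨φ,1⟩ = ⟨φ̃,1⟩ = v1 - v0): if ‖Aφ̃ - b‖₂² ≤ (1+ε)·‖Aφ - b‖₂² where φ minimizes ‖Ax - b‖₂ subject to ⟨x,1⟩ = v1 - v0, and γ = ‖Aφ - b‖₂²/‖Aφ‖₂², then ‖φ - φ̃‖₂² ≤ ε·γ·‖φ‖₂². -/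
open Matrix
open scoped InnerProductSpace

/-! Minimality of `φ` on the affine hyperplane `φ + 𝟙ᗮ` makes the residual `Aφ - b` orthogonal to
`A(𝟙ᗮ)`, so `‖Aφ̃ - b‖² = ‖Aφ - b‖² + ‖A(φ̃ - φ)‖²` and the approximation hypothesis gives
`‖A(φ̃ - φ)‖² ≤ ε ‖Aφ - b‖² = εγ ‖Aφ‖²`. As `φ̃ - φ ⊥ 𝟙`, the left side is `‖φ̃ - φ‖² / n`;
as `A` kills `𝟙`, only the component of `φ` orthogonal to `𝟙` contributes to `Aφ`, so
`‖Aφ‖² ≤ ‖φ‖² / n`. -/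

section LeastSquares

variable {E F : Type*} [NormedAddCommGroup E] [InnerProductSpace ℝ E]
  [NormedAddCommGroup F] [InnerProductSpace ℝ F]

theorem real_inner_eq_zero_of_forall_norm_sq_le_norm_add_smul_sq {r w : F}
    (h : ∀ t : ℝ, ‖r‖ ^ 2 ≤ ‖r + t • w‖ ^ 2) : ⟪r, w⟫_ℝ = 0 := by
  have hquad : ∀ t : ℝ, 0 ≤ ‖w‖ ^ 2 * (t * t) + 2 * ⟪r, w⟫_ℝ * t + 0 := fun t => by
    have := h t
    rw [norm_add_sq_real, inner_smul_right, norm_smul, mul_pow, Real.norm_eq_abs, sq_abs] at this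
    linarith
  have := discrim_le_zero hquad
  rw [discrim] at this
  nlinarith [sq_nonneg ⟪r, w⟫_ℝ]

theorem LinearMap.norm_sq_apply_sub_eq_add_of_forall_le {A : E →ₗ[ℝ] F} {K : Submodule ℝ E}
    {b : F} {φ : E} (hmin : ∀ x, x - φ ∈ K → ‖A φ - b‖ ^ 2 ≤ ‖A x - b‖ ^ 2) {y : E}
    (hy : y - φ ∈ K) :
    ‖A y - b‖ ^ 2 = ‖A φ - b‖ ^ 2 + ‖A (y - φ)‖ ^ 2 := by
  have horth : ⟪A φ - b, A (y - φ)⟫_ℝ = 0 := by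
    refine real_inner_eq_zero_of_forall_norm_sq_le_norm_add_smul_sq fun t => ?_
    have hmem : φ + t • (y - φ) - φ ∈ K := by simpa using K.smul_mem t hy
    convert hmin _ hmem using 3
    rw [map_add, map_smul]; abel
  rw [show A y - b = (A φ - b) + A (y - φ) by rw [map_sub]; abel, norm_add_sq_real, horth,
    mul_zero, add_zero]

theorem LinearMap.norm_sq_apply_le_of_apply_eq_zero {A : E →ₗ[ℝ] F} {u : E} {c : ℝ}
    (hAu : A u = 0) (hA : ∀ x, ⟪x, u⟫_ℝ = 0 → ‖A x‖ ^ 2 = c * ‖x‖ ^ 2) (hc : 0 ≤ c) (x : E) :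
    ‖A x‖ ^ 2 ≤ c * ‖x‖ ^ 2 := by
  set K := (ℝ ∙ u)ᗮ
  have hperp : ⟪K.starProjection x, u⟫_ℝ = 0 :=
    Submodule.mem_orthogonal_singleton_iff_inner_left.mp (K.starProjection_apply_mem x)
  have hpar : A (x - K.starProjection x) = 0 := by
    obtain ⟨a, ha⟩ := Submodule.mem_span_singleton.mp <| by
      simpa only [K, Submodule.orthogonal_orthogonal] using K.sub_starProjection_mem_orthogonal x
    rw [← ha, map_smul, hAu, smul_zero]
  rw [map_sub, sub_eq_zero] at hpar
  rw [hpar, hA _ hperp]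
  gcongr
  exact K.norm_starProjection_apply_le x

theorem LinearMap.norm_sq_sub_le_of_norm_sq_residual_le {A : E →ₗ[ℝ] F} {u : E} {c : ℝ}
    (hc : 0 < c) (hAu : A u = 0) (hA : ∀ x, ⟪x, u⟫_ℝ = 0 → ‖A x‖ ^ 2 = c * ‖x‖ ^ 2)
    {b : F} {φ φt : E} (hmin : ∀ x, ⟪x, u⟫_ℝ = ⟪φ, u⟫_ℝ → ‖A φ - b‖ ^ 2 ≤ ‖A x - b‖ ^ 2)
    (hφt : ⟪φt, u⟫_ℝ = ⟪φ, u⟫_ℝ) (hAφ : A φ ≠ 0) {ε : ℝ}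
    (happrox : ‖A φt - b‖ ^ 2 ≤ (1 + ε) * ‖A φ - b‖ ^ 2) :
    ‖φ - φt‖ ^ 2 ≤ ε * (‖A φ - b‖ ^ 2 / ‖A φ‖ ^ 2) * ‖φ‖ ^ 2 := by
  have hconstr : ∀ x, x - φ ∈ (ℝ ∙ u)ᗮ ↔ ⟪x, u⟫_ℝ = ⟪φ, u⟫_ℝ := fun x => by
    rw [Submodule.mem_orthogonal_singleton_iff_inner_left, inner_sub_left, sub_eq_zero]
  have hpyth := A.norm_sq_apply_sub_eq_add_of_forall_le (K := (ℝ ∙ u)ᗮ)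
    (fun x hx => hmin x ((hconstr x).mp hx)) ((hconstr φt).mpr hφt)
  have hd : ‖A (φt - φ)‖ ^ 2 = c * ‖φ - φt‖ ^ 2 := by
    rw [hA _ (by rw [inner_sub_left, hφt, sub_self]), norm_sub_rev]
  have hAφ_le := A.norm_sq_apply_le_of_apply_eq_zero hAu hA hc.le φ
  have hAφ_pos : 0 < ‖A φ‖ ^ 2 := by positivity
  set R := ‖A φ - b‖ ^ 2
  set s := ‖A φ‖ ^ 2
  have hεR : c * ‖φ - φt‖ ^ 2 ≤ ε * R := by linarith
  have hεR_eq : ε * R = ε * (R / s) * s := by rw [mul_assoc, div_mul_cancel₀ _ hAφ_pos.ne']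
  have hεγ : 0 ≤ ε * (R / s) :=
    (mul_nonneg_iff_of_pos_right hAφ_pos).mp (hεR_eq ▸ (by positivity : (0 : ℝ) ≤ _).trans hεR)
  refine le_of_mul_le_mul_left ?_ hc
  calc c * ‖φ - φt‖ ^ 2 ≤ ε * R := hεR
    _ = ε * (R / s) * s := hεR_eq
    _ ≤ ε * (R / s) * (c * ‖φ‖ ^ 2) := mul_le_mul_of_nonneg_left hAφ_le hεγ
    _ = c * (ε * (R / s) * ‖φ‖ ^ 2) := by ring

end LeastSquares

theorem EuclideanSpace.norm_toLp_sq {ι : Type*} [Fintype ι] (x : ι → ℝ) :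
    ‖WithLp.toLp 2 x‖ ^ 2 = ∑ i, x i ^ 2 := by
  simp [EuclideanSpace.norm_sq_eq]

theorem EuclideanSpace.inner_toLp_one {ι : Type*} [Fintype ι] (x : ι → ℝ) :
    ⟪WithLp.toLp 2 x, WithLp.toLp 2 (fun _ => (1 : ℝ))⟫_ℝ = ∑ i, x i := by
  simp [PiLp.inner_apply]

theorem l2_error_bound_general (n m : ℕ) (hn : 2 ≤ n)
    (A : Matrix (Fin m) (Fin n) ℝ)
    (hA1 : A *ᵥ (fun _ => (1 : ℝ)) = 0)
    (hAiso : ∀ x : Fin n → ℝ, (∑ i, x i) = 0 →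
      ∑ p, ((A *ᵥ x) p) ^ 2 = (1 / n : ℝ) * ∑ i, (x i) ^ 2)
    (b : Fin m → ℝ) (v1 v0 : ℝ)
    (φ φt : Fin n → ℝ)
    (hφc : (∑ i, φ i) = v1 - v0) (hφtc : (∑ i, φt i) = v1 - v0)
    (hmin : ∀ x : Fin n → ℝ, (∑ i, x i) = v1 - v0 →
      ∑ p, ((A *ᵥ φ) p - b p) ^ 2 ≤ ∑ p, ((A *ᵥ x) p - b p) ^ 2)
    (hAφ : (∑ p, ((A *ᵥ φ) p) ^ 2) ≠ 0)
    (ε : ℝ)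
    (happrox : ∑ p, ((A *ᵥ φt) p - b p) ^ 2 ≤ (1 + ε) * ∑ p, ((A *ᵥ φ) p - b p) ^ 2)
    (γ : ℝ) (hγ : γ = (∑ p, ((A *ᵥ φ) p - b p) ^ 2) / (∑ p, ((A *ᵥ φ) p) ^ 2)) :
    ∑ i, (φ i - φt i) ^ 2 ≤ ε * γ * ∑ i, (φ i) ^ 2 := by
  have hc : (0 : ℝ) < 1 / n := one_div_pos.mpr (Nat.cast_pos.mpr (by omega))
  have key := (toEuclideanLin A).norm_sq_sub_le_of_norm_sq_residual_le
    (u := WithLp.toLp 2 fun _ => 1) (b := WithLp.toLp 2 b) (φ := WithLp.toLp 2 φ)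
    (φt := WithLp.toLp 2 φt) hc (by simp [hA1]) ?iso ?min
    (by simp [EuclideanSpace.inner_toLp_one, hφc, hφtc])
    (by simpa [← EuclideanSpace.norm_toLp_sq] using hAφ)
    (by simpa [← WithLp.toLp_sub, EuclideanSpace.norm_toLp_sq] using happrox)
  · simpa [hγ, ← WithLp.toLp_sub, EuclideanSpace.norm_toLp_sq] using key
  case iso =>
    rintro ⟨x⟩ hx
    simpa [EuclideanSpace.norm_toLp_sq] using
      hAiso x (by simpa [EuclideanSpace.inner_toLp_one] using hx)
  case min =>
    rintro ⟨x⟩ hx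
    simpa [← WithLp.toLp_sub, EuclideanSpace.norm_toLp_sq] using
      hmin x (by simpa [EuclideanSpace.inner_toLp_one, hφc] using hx)

theorem l2_error_bound (n m : ℕ) (hn : 2 ≤ n)
    (A : Matrix (Fin m) (Fin n) ℝ)
    (hA1 : A *ᵥ (fun _ => (1 : ℝ)) = 0)
    (hAiso : ∀ x : Fin n → ℝ, (∑ i, x i) = 0 →
      ∑ p, ((A *ᵥ x) p) ^ 2 = (1 / n : ℝ) * ∑ i, (x i) ^ 2)
    (b : Fin m → ℝ) (v1 v0 : ℝ)
    (φ φt : Fin n → ℝ)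
    (hφc : (∑ i, φ i) = v1 - v0) (hφtc : (∑ i, φt i) = v1 - v0)
    (hmin : ∀ x : Fin n → ℝ, (∑ i, x i) = v1 - v0 →
      ∑ p, ((A *ᵥ φ) p - b p) ^ 2 ≤ ∑ p, ((A *ᵥ x) p - b p) ^ 2)
    (hAφ : (∑ p, ((A *ᵥ φ) p) ^ 2) ≠ 0)
    (ε : ℝ) (hε : 0 ≤ ε)
    (happrox : ∑ p, ((A *ᵥ φt) p - b p) ^ 2 ≤ (1 + ε) * ∑ p, ((A *ᵥ φ) p - b p) ^ 2)
    (γ : ℝ) (hγ : γ = (∑ p, ((A *ᵥ φ) p - b p) ^ 2) / (∑ p, ((A *ᵥ φ) p) ^ 2)) :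
    ∑ i, (φ i - φt i) ^ 2 ≤ ε * γ * ∑ i, (φ i) ^ 2 :=
  l2_error_bound_general n m hn A hA1 hAiso b v1 v0 φ φt hφc hφtc hmin hAφ ε happrox γ hγ
end
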